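/- arXiv:2510.15274 — 3 statements merged into one kernel-verified Lean document; each statement's English description precedes it below -/
import Mathlib

section
/- Stability of the auxiliary-variable relation: suppose ρ, e, Q are periodic grid functions on the M₁×M₂ periodic grid with step size h > 0 satisfying, at every grid point, ρ = δxx e − (h²/12)·δxx ρ + Q. Then ‖ρ‖ ≤ (6/h²)·‖e‖ + (3/2)·‖Q‖. The analogous statement holds with δxx replaced by δyy. -/
open Real Finset Asymptotics

/-- A periodic grid function on the `M₁ × M₂` periodic grid. -/
abbrev GridFun (M₁ M₂ : ℕ) : Type := ZMod M₁ × ZMod M₂ → ℝ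

variable {M₁ M₂ : ℕ}

/-- Discrete inner product `⟨u,v⟩ = h² Σ_a Σ_b u(a,b) v(a,b)`. -/
noncomputable def gip [NeZero M₁] [NeZero M₂] (h : ℝ) (u v : GridFun M₁ M₂) : ℝ :=
  h ^ 2 * ∑ a : ZMod M₁, ∑ b : ZMod M₂, u (a, b) * v (a, b)

/-- Discrete L² norm. -/
noncomputable def gnorm [NeZero M₁] [NeZero M₂] (h : ℝ) (v : GridFun M₁ M₂) : ℝ :=
  Real.sqrt (gip h v v)

/-- Forward difference in `x`. -/
noncomputable def dx (h : ℝ) (v : GridFun M₁ M₂) : GridFun M₁ M₂ :=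
  fun p => (v (p.1 + 1, p.2) - v p) / h

/-- Forward difference in `y`. -/
noncomputable def dy (h : ℝ) (v : GridFun M₁ M₂) : GridFun M₁ M₂ :=
  fun p => (v (p.1, p.2 + 1) - v p) / h

/-- Central difference in `x`. -/
noncomputable def dhx (h : ℝ) (v : GridFun M₁ M₂) : GridFun M₁ M₂ :=
  fun p => (v (p.1 + 1, p.2) - v (p.1 - 1, p.2)) / (2 * h)

/-- Central difference in `y`. -/
noncomputable def dhy (h : ℝ) (v : GridFun M₁ M₂) : GridFun M₁ M₂ :=
  fun p => (v (p.1, p.2 + 1) - v (p.1, p.2 - 1)) / (2 * h)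

/-- Second difference in `x`. -/
noncomputable def dxx (h : ℝ) (v : GridFun M₁ M₂) : GridFun M₁ M₂ :=
  fun p => (v (p.1 + 1, p.2) - 2 * v p + v (p.1 - 1, p.2)) / h ^ 2

/-- Second difference in `y`. -/
noncomputable def dyy (h : ℝ) (v : GridFun M₁ M₂) : GridFun M₁ M₂ :=
  fun p => (v (p.1, p.2 + 1) - 2 * v p + v (p.1, p.2 - 1)) / h ^ 2

/-- Combined central difference `δ̂h = δ̂x + δ̂y`. -/
noncomputable def dhath (h : ℝ) (v : GridFun M₁ M₂) : GridFun M₁ M₂ :=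
  fun p => dhx h v p + dhy h v p

/-- Discrete H¹ seminorm. -/
noncomputable def snorm1 [NeZero M₁] [NeZero M₂] (h : ℝ) (v : GridFun M₁ M₂) : ℝ :=
  Real.sqrt (gnorm h (dx h v) ^ 2 + gnorm h (dy h v) ^ 2)

/-- Bilinear operator `ψx(u,v) = (1/3)(u δ̂x v + δ̂x (u v))`. -/
noncomputable def psix (h : ℝ) (u v : GridFun M₁ M₂) : GridFun M₁ M₂ :=
  fun p => (1 / 3 : ℝ) * (u p * dhx h v p + dhx h (fun q => u q * v q) p)

/-- Bilinear operator `ψy(u,v) = (1/3)(u δ̂y v + δ̂y (u v))`. -/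
noncomputable def psiy (h : ℝ) (u v : GridFun M₁ M₂) : GridFun M₁ M₂ :=
  fun p => (1 / 3 : ℝ) * (u p * dhy h v p + dhy h (fun q => u q * v q) p)

/-- Bilinear operator `ψh(u,v) = (1/3)(u δ̂h v + δ̂h (u v))`. -/
noncomputable def psih (h : ℝ) (u v : GridFun M₁ M₂) : GridFun M₁ M₂ :=
  fun p => (1 / 3 : ℝ) * (u p * dhath h v p + dhath h (fun q => u q * v q) p)



open scoped RealInnerProductSpace

section Aux

variable {ι : Type*} [Fintype ι]

noncomputable def toE (v : ι → ℝ) : EuclideanSpace ℝ ι := (WithLp.equiv 2 (ι → ℝ)).symm v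

lemma toE_norm (v : ι → ℝ) : ‖toE v‖ = Real.sqrt (∑ i, v i ^ 2) := by
  simp [toE, EuclideanSpace.norm_eq, Real.norm_eq_abs, sq_abs]

lemma toE_norm_comp (σ : ι ≃ ι) (v : ι → ℝ) : ‖toE (fun i => v (σ i))‖ = ‖toE v‖ := by
  rw [toE_norm, toE_norm, Equiv.sum_comp σ (fun i => v i ^ 2)]

lemma second_diff_norm_le (σ τ : ι ≃ ι) (v : ι → ℝ) :
    ‖toE (fun i => v (σ i) - 2 * v i + v (τ i))‖ ≤ 4 * ‖toE v‖ := by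
  have h1 : toE (fun i => v (σ i) - 2 * v i + v (τ i))
      = toE (fun i => v (σ i)) - (2:ℝ) • toE v + toE (fun i => v (τ i)) := rfl
  have hs := toE_norm_comp σ v
  have ht := toE_norm_comp τ v
  calc ‖toE (fun i => v (σ i) - 2 * v i + v (τ i))‖
      ≤ ‖toE (fun i => v (σ i)) - (2:ℝ) • toE v‖ + ‖toE (fun i => v (τ i))‖ := by
        rw [h1]; exact norm_add_le _ _
    _ ≤ ‖toE (fun i => v (σ i))‖ + ‖(2:ℝ) • toE v‖ + ‖toE (fun i => v (τ i))‖ := by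
        have := norm_sub_le (toE (fun i => v (σ i))) ((2:ℝ) • toE v); linarith
    _ = 4 * ‖toE v‖ := by rw [norm_smul, hs, ht]; simp; ring

lemma abstract_stab (h : ℝ) (hh : 0 < h) (σ τ : ι ≃ ι) (ρ e Q : ι → ℝ)
    (hrel : ∀ i, ρ i = (e (σ i) - 2 * e i + e (τ i)) / h ^ 2
      - h ^ 2 / 12 * ((ρ (σ i) - 2 * ρ i + ρ (τ i)) / h ^ 2) + Q i) :
    ‖toE ρ‖ ≤ 6 / h ^ 2 * ‖toE e‖ + 3 / 2 * ‖toE Q‖ := by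
  have hne : (h:ℝ) ^ 2 ≠ 0 := by positivity
  have hinvpos : (0:ℝ) < (h ^ 2)⁻¹ := by positivity
  set R := toE ρ with hR
  set Dρ := toE (fun i => ρ (σ i) - 2 * ρ i + ρ (τ i)) with hDρ
  set De := toE (fun i => e (σ i) - 2 * e i + e (τ i)) with hDe
  have hvec : R + (12:ℝ)⁻¹ • Dρ = (h ^ 2)⁻¹ • De + toE Q := by
    ext i
    show ρ i + (12:ℝ)⁻¹ * (ρ (σ i) - 2 * ρ i + ρ (τ i))
        = (h ^ 2)⁻¹ * (e (σ i) - 2 * e i + e (τ i)) + Q i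
    have hri := hrel i
    rw [show h ^ 2 / 12 * ((ρ (σ i) - 2 * ρ i + ρ (τ i)) / h ^ 2)
        = (ρ (σ i) - 2 * ρ i + ρ (τ i)) / 12 by field_simp] at hri
    linear_combination hri
  have hinner : (inner ℝ R R : ℝ) + (12:ℝ)⁻¹ * (inner ℝ Dρ R : ℝ) = (h ^ 2)⁻¹ * (inner ℝ De R : ℝ) + (inner ℝ (toE Q) R : ℝ) := by
    have := congrArg (fun x => (inner ℝ x R : ℝ)) hvec
    simp only [inner_add_left, real_inner_smul_left] at this
    exact this
  have hRR : (inner ℝ R R : ℝ) = ‖R‖ ^ 2 := real_inner_self_eq_norm_sq R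
  have b1 : |(inner ℝ Dρ R : ℝ)| ≤ ‖Dρ‖ * ‖R‖ := abs_real_inner_le_norm _ _
  have b2 : |(inner ℝ De R : ℝ)| ≤ ‖De‖ * ‖R‖ := abs_real_inner_le_norm _ _
  have b3 : (inner ℝ (toE Q) R : ℝ) ≤ ‖toE Q‖ * ‖R‖ := real_inner_le_norm _ _
  have nDρ : ‖Dρ‖ ≤ 4 * ‖R‖ := second_diff_norm_le σ τ ρ
  have nDe : ‖De‖ ≤ 4 * ‖toE e‖ := second_diff_norm_le σ τ e
  have hRn : (0:ℝ) ≤ ‖R‖ := norm_nonneg _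
  have mρ : ‖Dρ‖ * ‖R‖ ≤ 4 * ‖R‖ ^ 2 := by nlinarith
  have me : ‖De‖ * ‖R‖ ≤ 4 * ‖toE e‖ * ‖R‖ := by nlinarith
  have hDeb : (h ^ 2)⁻¹ * (inner ℝ De R : ℝ) ≤ (h ^ 2)⁻¹ * (4 * ‖toE e‖ * ‖R‖) := by
    have : (inner ℝ De R : ℝ) ≤ 4 * ‖toE e‖ * ‖R‖ := le_trans (le_trans (le_abs_self _) b2) me
    exact mul_le_mul_of_nonneg_left this hinvpos.le
  have hDρb : -((12:ℝ)⁻¹ * (inner ℝ Dρ R : ℝ)) ≤ (12:ℝ)⁻¹ * (4 * ‖R‖ ^ 2) := by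
    have h2 : -(inner ℝ Dρ R : ℝ) ≤ |(inner ℝ Dρ R : ℝ)| := neg_le_abs _
    linarith [b1, mρ]
  have key : (2/3 : ℝ) * ‖R‖ ^ 2 ≤ ((h ^ 2)⁻¹ * (4 * ‖toE e‖) + ‖toE Q‖) * ‖R‖ := by
    nlinarith [hinner, hRR, hDeb, hDρb, b3]
  rcases eq_or_lt_of_le hRn with h0 | h0
  · rw [← h0]; positivity
  · have h1 : (2/3 : ℝ) * ‖R‖ ≤ (h ^ 2)⁻¹ * (4 * ‖toE e‖) + ‖toE Q‖ := by
      have := (mul_le_mul_iff_of_pos_right h0).mp (by linarith [key] : (2/3 : ℝ) * ‖R‖ * ‖R‖ ≤ ((h ^ 2)⁻¹ * (4 * ‖toE e‖) + ‖toE Q‖) * ‖R‖)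
      exact this
    have h6 : 6 / h ^ 2 = 6 * (h ^ 2)⁻¹ := by ring
    rw [h6]; linarith [h1]



lemma gnorm_eq_toE [NeZero M₁] [NeZero M₂] (h : ℝ) (hh : 0 < h) (v : GridFun M₁ M₂) :
    gnorm h v = h * ‖toE v‖ := by
  rw [gnorm, gip, toE_norm]
  have hsum : ∑ a : ZMod M₁, ∑ b : ZMod M₂, v (a, b) * v (a, b)
      = ∑ p : ZMod M₁ × ZMod M₂, v p ^ 2 := by
    rw [Fintype.sum_prod_type]
    exact Finset.sum_congr rfl fun a _ => Finset.sum_congr rfl fun b _ => (sq (v (a, b))).symm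
  rw [hsum, Real.sqrt_mul (by positivity), Real.sqrt_sq hh.le]

end Aux

/-- Stability of the auxiliary-variable relation, in both directions. -/
theorem auxiliary_relation_stability [NeZero M₁] [NeZero M₂] (h : ℝ) (hh : 0 < h)
    (ρ e Q ρ' e' Q' : GridFun M₁ M₂)
    (hx : ∀ p, ρ p = dxx h e p - h ^ 2 / 12 * dxx h ρ p + Q p)
    (hy : ∀ p, ρ' p = dyy h e' p - h ^ 2 / 12 * dyy h ρ' p + Q' p) :
    gnorm h ρ ≤ 6 / h ^ 2 * gnorm h e + 3 / 2 * gnorm h Q ∧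
    gnorm h ρ' ≤ 6 / h ^ 2 * gnorm h e' + 3 / 2 * gnorm h Q' := by
  constructor
  · have key := abstract_stab h hh
      ((Equiv.addRight (1 : ZMod M₁)).prodCongr (Equiv.refl (ZMod M₂)))
      ((Equiv.subRight (1 : ZMod M₁)).prodCongr (Equiv.refl (ZMod M₂))) ρ e Q ?_
    · rw [gnorm_eq_toE h hh ρ, gnorm_eq_toE h hh e, gnorm_eq_toE h hh Q]
      calc h * ‖toE ρ‖ ≤ h * (6 / h ^ 2 * ‖toE e‖ + 3 / 2 * ‖toE Q‖) :=
            mul_le_mul_of_nonneg_left key hh.le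
        _ = 6 / h ^ 2 * (h * ‖toE e‖) + 3 / 2 * (h * ‖toE Q‖) := by ring
    · intro i
      have := hx i
      simpa [dxx, Equiv.prodCongr, Prod.map] using this
  · have key := abstract_stab h hh
      ((Equiv.refl (ZMod M₁)).prodCongr (Equiv.addRight (1 : ZMod M₂)))
      ((Equiv.refl (ZMod M₁)).prodCongr (Equiv.subRight (1 : ZMod M₂))) ρ' e' Q' ?_
    · rw [gnorm_eq_toE h hh ρ', gnorm_eq_toE h hh e', gnorm_eq_toE h hh Q']
      calc h * ‖toE ρ'‖ ≤ h * (6 / h ^ 2 * ‖toE e'‖ + 3 / 2 * ‖toE Q'‖) :=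
            mul_le_mul_of_nonneg_left key hh.le
        _ = 6 / h ^ 2 * (h * ‖toE e'‖) + 3 / 2 * (h * ‖toE Q'‖) := by ring
    · intro i
      have := hy i
      simpa [dyy, Equiv.prodCongr, Prod.map] using this
end

section
/- Unique solvability of one time step of the fine-grid linearized compact scheme: let τ > 0, λ > 0, let a, b, c be arbitrary fixed periodic grid functions on the M₁×M₂ periodic grid with step size h > 0 (the interpolated data), and let u⁰, v⁰, w⁰ be given periodic grid functions (the previous time layer). Then there exists a unique triple (u, v, w) of periodic grid functions satisfying, at every grid point, (u − u⁰)/τ + ψh(a, (u + u⁰)/2) − (h²/2)·(ψx(b, (u + u⁰)/2) + ψy(c, (u + u⁰)/2)) = λ·((v + v⁰)/2 + (w + w⁰)/2), together with v = δxx u − (h²/12)·δxx v and w = δyy u − (h²/12)·δyy w. -/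
open Real Finset Asymptotics

variable {M₁ M₂ : ℕ}

section AuxLemmas

lemma sum_shift_x [NeZero M₁] [NeZero M₂] (F : GridFun M₁ M₂) (k : ZMod M₁) :
    ∑ p : ZMod M₁ × ZMod M₂, F (p.1 + k, p.2) = ∑ p, F p :=
  Fintype.sum_equiv ((Equiv.addRight k).prodCongr (Equiv.refl _)) _ _ (fun _ => rfl)

lemma sum_shift_y [NeZero M₁] [NeZero M₂] (F : GridFun M₁ M₂) (k : ZMod M₂) :
    ∑ p : ZMod M₁ × ZMod M₂, F (p.1, p.2 + k) = ∑ p, F p :=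
  Fintype.sum_equiv ((Equiv.refl _).prodCongr (Equiv.addRight k)) _ _ (fun _ => rfl)

variable [NeZero M₁] [NeZero M₂]

lemma A1x (f g : GridFun M₁ M₂) :
    ∑ p : ZMod M₁ × ZMod M₂, f (p.1 + 1, p.2) * g p = ∑ p, f p * g (p.1 - 1, p.2) := by
  have := sum_shift_x (fun p => f (p.1 + 1, p.2) * g p) (-1)
  simp only [neg_add_cancel_right, Prod.mk.eta] at this
  rw [← this]
  exact Finset.sum_congr rfl fun p _ => by rw [sub_eq_add_neg]

lemma A2x (f g : GridFun M₁ M₂) :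
    ∑ p : ZMod M₁ × ZMod M₂, f (p.1 - 1, p.2) * g p = ∑ p, f p * g (p.1 + 1, p.2) := by
  have := sum_shift_x (fun p => f (p.1 - 1, p.2) * g p) 1
  simp only [add_sub_cancel_right, Prod.mk.eta] at this
  rw [← this]

lemma A3x (f g : GridFun M₁ M₂) :
    ∑ p : ZMod M₁ × ZMod M₂, f (p.1 + 1, p.2) * g (p.1 + 1, p.2) = ∑ p, f p * g p :=
  sum_shift_x (fun p => f p * g p) 1

lemma A1y (f g : GridFun M₁ M₂) :
    ∑ p : ZMod M₁ × ZMod M₂, f (p.1, p.2 + 1) * g p = ∑ p, f p * g (p.1, p.2 - 1) := by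
  have := sum_shift_y (fun p => f (p.1, p.2 + 1) * g p) (-1)
  simp only [neg_add_cancel_right, Prod.mk.eta] at this
  rw [← this]
  exact Finset.sum_congr rfl fun p _ => by rw [sub_eq_add_neg]

lemma A2y (f g : GridFun M₁ M₂) :
    ∑ p : ZMod M₁ × ZMod M₂, f (p.1, p.2 - 1) * g p = ∑ p, f p * g (p.1, p.2 + 1) := by
  have := sum_shift_y (fun p => f (p.1, p.2 - 1) * g p) 1
  simp only [add_sub_cancel_right, Prod.mk.eta] at this
  rw [← this]

lemma A3y (f g : GridFun M₁ M₂) :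
    ∑ p : ZMod M₁ × ZMod M₂, f (p.1, p.2 + 1) * g (p.1, p.2 + 1) = ∑ p, f p * g p :=
  sum_shift_y (fun p => f p * g p) 1

lemma split2 (c₁ c₂ : ℝ) (F₁ F₂ : GridFun M₁ M₂) :
    ∑ p : ZMod M₁ × ZMod M₂, (c₁ * F₁ p + c₂ * F₂ p) = c₁ * ∑ p, F₁ p + c₂ * ∑ p, F₂ p := by
  simp [Finset.sum_add_distrib, ← Finset.mul_sum]

lemma split3 (c₁ c₂ c₃ : ℝ) (F₁ F₂ F₃ : GridFun M₁ M₂) :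
    ∑ p : ZMod M₁ × ZMod M₂, (c₁ * F₁ p + c₂ * F₂ p + c₃ * F₃ p)
      = c₁ * ∑ p, F₁ p + c₂ * ∑ p, F₂ p + c₃ * ∑ p, F₃ p := by
  simp [Finset.sum_add_distrib, ← Finset.mul_sum]

lemma split4 (c₁ c₂ c₃ c₄ : ℝ) (F₁ F₂ F₃ F₄ : GridFun M₁ M₂) :
    ∑ p : ZMod M₁ × ZMod M₂, (c₁ * F₁ p + c₂ * F₂ p + c₃ * F₃ p + c₄ * F₄ p)
      = c₁ * ∑ p, F₁ p + c₂ * ∑ p, F₂ p + c₃ * ∑ p, F₃ p + c₄ * ∑ p, F₄ p := by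
  simp [Finset.sum_add_distrib, ← Finset.mul_sum]

lemma split6 (c₁ c₂ c₃ c₄ c₅ c₆ : ℝ) (F₁ F₂ F₃ F₄ F₅ F₆ : GridFun M₁ M₂) :
    ∑ p : ZMod M₁ × ZMod M₂,
        (c₁ * F₁ p + c₂ * F₂ p + c₃ * F₃ p + c₄ * F₄ p + c₅ * F₅ p + c₆ * F₆ p)
      = c₁ * ∑ p, F₁ p + c₂ * ∑ p, F₂ p + c₃ * ∑ p, F₃ p + c₄ * ∑ p, F₄ p
        + c₅ * ∑ p, F₅ p + c₆ * ∑ p, F₆ p := by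
  simp [Finset.sum_add_distrib, ← Finset.mul_sum]

lemma skewx (h : ℝ) (f g : GridFun M₁ M₂) :
    ∑ p : ZMod M₁ × ZMod M₂, dhx h f p * g p = -∑ p, f p * dhx h g p := by
  have e1 : ∑ p : ZMod M₁ × ZMod M₂, dhx h f p * g p
      = ∑ p : ZMod M₁ × ZMod M₂,
          ((1/(2*h)) * (f (p.1+1,p.2) * g p) + (-(1/(2*h))) * (f (p.1-1,p.2) * g p)) :=
    Finset.sum_congr rfl fun p _ => by simp only [dhx]; ring
  have e2 : ∑ p : ZMod M₁ × ZMod M₂, f p * dhx h g p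
      = ∑ p : ZMod M₁ × ZMod M₂,
          ((1/(2*h)) * (f p * g (p.1+1,p.2)) + (-(1/(2*h))) * (f p * g (p.1-1,p.2))) :=
    Finset.sum_congr rfl fun p _ => by simp only [dhx]; ring
  rw [e1, e2, split2, split2, A1x, A2x]
  ring

lemma skewy (h : ℝ) (f g : GridFun M₁ M₂) :
    ∑ p : ZMod M₁ × ZMod M₂, dhy h f p * g p = -∑ p, f p * dhy h g p := by
  have e1 : ∑ p : ZMod M₁ × ZMod M₂, dhy h f p * g p
      = ∑ p : ZMod M₁ × ZMod M₂,
          ((1/(2*h)) * (f (p.1,p.2+1) * g p) + (-(1/(2*h))) * (f (p.1,p.2-1) * g p)) :=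
    Finset.sum_congr rfl fun p _ => by simp only [dhy]; ring
  have e2 : ∑ p : ZMod M₁ × ZMod M₂, f p * dhy h g p
      = ∑ p : ZMod M₁ × ZMod M₂,
          ((1/(2*h)) * (f p * g (p.1,p.2+1)) + (-(1/(2*h))) * (f p * g (p.1,p.2-1))) :=
    Finset.sum_congr rfl fun p _ => by simp only [dhy]; ring
  rw [e1, e2, split2, split2, A1y, A2y]
  ring

lemma ibpx (h : ℝ) (f g : GridFun M₁ M₂) :
    ∑ p : ZMod M₁ × ZMod M₂, dxx h f p * g p = -∑ p, dx h f p * dx h g p := by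
  have e1 : ∑ p : ZMod M₁ × ZMod M₂, dxx h f p * g p
      = ∑ p : ZMod M₁ × ZMod M₂, ((1/h^2) * (f (p.1+1,p.2) * g p) + (-(2/h^2)) * (f p * g p)
          + (1/h^2) * (f (p.1-1,p.2) * g p)) :=
    Finset.sum_congr rfl fun p _ => by simp only [dxx]; ring
  have e2 : ∑ p : ZMod M₁ × ZMod M₂, dx h f p * dx h g p
      = ∑ p : ZMod M₁ × ZMod M₂,
          ((1/h^2) * (f (p.1+1,p.2) * g (p.1+1,p.2)) + (-(1/h^2)) * (f (p.1+1,p.2) * g p)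
          + (-(1/h^2)) * (f p * g (p.1+1,p.2)) + (1/h^2) * (f p * g p)) :=
    Finset.sum_congr rfl fun p _ => by simp only [dx]; ring
  rw [e1, e2, split3, split4, A1x, A2x, A3x]
  have c1 : ∑ p : ZMod M₁ × ZMod M₂, f p * g (p.1 - 1, p.2) = ∑ p, f (p.1+1,p.2) * g p :=
    (A1x f g).symm
  rw [c1, A1x]
  ring

lemma ibpy (h : ℝ) (f g : GridFun M₁ M₂) :
    ∑ p : ZMod M₁ × ZMod M₂, dyy h f p * g p = -∑ p, dy h f p * dy h g p := by
  have e1 : ∑ p : ZMod M₁ × ZMod M₂, dyy h f p * g p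
      = ∑ p : ZMod M₁ × ZMod M₂, ((1/h^2) * (f (p.1,p.2+1) * g p) + (-(2/h^2)) * (f p * g p)
          + (1/h^2) * (f (p.1,p.2-1) * g p)) :=
    Finset.sum_congr rfl fun p _ => by simp only [dyy]; ring
  have e2 : ∑ p : ZMod M₁ × ZMod M₂, dy h f p * dy h g p
      = ∑ p : ZMod M₁ × ZMod M₂,
          ((1/h^2) * (f (p.1,p.2+1) * g (p.1,p.2+1)) + (-(1/h^2)) * (f (p.1,p.2+1) * g p)
          + (-(1/h^2)) * (f p * g (p.1,p.2+1)) + (1/h^2) * (f p * g p)) :=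
    Finset.sum_congr rfl fun p _ => by simp only [dy]; ring
  rw [e1, e2, split3, split4, A1y, A2y, A3y]
  have c1 : ∑ p : ZMod M₁ × ZMod M₂, f p * g (p.1, p.2 - 1) = ∑ p, f (p.1,p.2+1) * g p :=
    (A1y f g).symm
  rw [c1, A1y]
  ring

lemma psix_energy (h : ℝ) (b g : GridFun M₁ M₂) :
    ∑ p : ZMod M₁ × ZMod M₂, psix h b g p * g p = 0 := by
  have e1 : ∑ p : ZMod M₁ × ZMod M₂, psix h b g p * g p
      = ∑ p : ZMod M₁ × ZMod M₂,
          ((1/3) * (b p * dhx h g p * g p) + (1/3) * (dhx h (fun q => b q * g q) p * g p)) :=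
    Finset.sum_congr rfl fun p _ => by simp only [psix]; ring
  rw [e1, split2, skewx]
  have e2 : ∑ p : ZMod M₁ × ZMod M₂, (fun q => b q * g q) p * dhx h g p
      = ∑ p : ZMod M₁ × ZMod M₂, b p * dhx h g p * g p :=
    Finset.sum_congr rfl fun p _ => by ring
  rw [e2]
  ring

lemma psiy_energy (h : ℝ) (b g : GridFun M₁ M₂) :
    ∑ p : ZMod M₁ × ZMod M₂, psiy h b g p * g p = 0 := by
  have e1 : ∑ p : ZMod M₁ × ZMod M₂, psiy h b g p * g p
      = ∑ p : ZMod M₁ × ZMod M₂,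
          ((1/3) * (b p * dhy h g p * g p) + (1/3) * (dhy h (fun q => b q * g q) p * g p)) :=
    Finset.sum_congr rfl fun p _ => by simp only [psiy]; ring
  rw [e1, split2, skewy]
  have e2 : ∑ p : ZMod M₁ × ZMod M₂, (fun q => b q * g q) p * dhy h g p
      = ∑ p : ZMod M₁ × ZMod M₂, b p * dhy h g p * g p :=
    Finset.sum_congr rfl fun p _ => by ring
  rw [e2]
  ring

lemma psih_energy (h : ℝ) (a g : GridFun M₁ M₂) :
    ∑ p : ZMod M₁ × ZMod M₂, psih h a g p * g p = 0 := by
  have e1 : ∑ p : ZMod M₁ × ZMod M₂, psih h a g p * g p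
      = ∑ p : ZMod M₁ × ZMod M₂, (psix h a g p * g p + psiy h a g p * g p) :=
    Finset.sum_congr rfl fun p _ => by simp only [psih, psix, psiy, dhath, dhx, dhy]; ring
  rw [e1, Finset.sum_add_distrib, psix_energy, psiy_energy]
  ring

lemma invx (h : ℝ) (hh : 0 < h) (v : GridFun M₁ M₂) :
    ∑ p : ZMod M₁ × ZMod M₂, dx h v p * dx h v p
      ≤ 4 / h^2 * ∑ p, v p * v p := by
  have step : ∑ p : ZMod M₁ × ZMod M₂, dx h v p * dx h v p
      ≤ ∑ p : ZMod M₁ × ZMod M₂,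
          ((2/h^2) * (v (p.1+1,p.2) * v (p.1+1,p.2)) + (2/h^2) * (v p * v p)) := by
    apply Finset.sum_le_sum
    intro p _
    have h2 : (0:ℝ) < h^2 := by positivity
    have e : dx h v p * dx h v p = (v (p.1+1,p.2) - v p)^2 / h^2 := by
      simp only [dx]; ring
    rw [e, div_le_iff₀ h2]
    have e2 : (2/h^2 * (v (p.1+1,p.2) * v (p.1+1,p.2)) + 2/h^2 * (v p * v p)) * h^2
        = 2 * (v (p.1+1,p.2) * v (p.1+1,p.2)) + 2 * (v p * v p) := by
      field_simp
    rw [e2]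
    nlinarith [sq_nonneg (v (p.1+1,p.2) + v p)]
  rw [split2, A3x v v] at step
  calc ∑ p : ZMod M₁ × ZMod M₂, dx h v p * dx h v p
      ≤ 2/h^2 * (∑ p : ZMod M₁ × ZMod M₂, v p * v p)
        + 2/h^2 * (∑ p : ZMod M₁ × ZMod M₂, v p * v p) := step
    _ = 4 / h^2 * ∑ p : ZMod M₁ × ZMod M₂, v p * v p := by ring

lemma invy (h : ℝ) (hh : 0 < h) (v : GridFun M₁ M₂) :
    ∑ p : ZMod M₁ × ZMod M₂, dy h v p * dy h v p
      ≤ 4 / h^2 * ∑ p, v p * v p := by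
  have step : ∑ p : ZMod M₁ × ZMod M₂, dy h v p * dy h v p
      ≤ ∑ p : ZMod M₁ × ZMod M₂,
          ((2/h^2) * (v (p.1,p.2+1) * v (p.1,p.2+1)) + (2/h^2) * (v p * v p)) := by
    apply Finset.sum_le_sum
    intro p _
    have h2 : (0:ℝ) < h^2 := by positivity
    have e : dy h v p * dy h v p = (v (p.1,p.2+1) - v p)^2 / h^2 := by
      simp only [dy]; ring
    rw [e, div_le_iff₀ h2]
    have e2 : (2/h^2 * (v (p.1,p.2+1) * v (p.1,p.2+1)) + 2/h^2 * (v p * v p)) * h^2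
        = 2 * (v (p.1,p.2+1) * v (p.1,p.2+1)) + 2 * (v p * v p) := by
      field_simp
    rw [e2]
    nlinarith [sq_nonneg (v (p.1,p.2+1) + v p)]
  rw [split2, A3y v v] at step
  calc ∑ p : ZMod M₁ × ZMod M₂, dy h v p * dy h v p
      ≤ 2/h^2 * (∑ p : ZMod M₁ × ZMod M₂, v p * v p)
        + 2/h^2 * (∑ p : ZMod M₁ × ZMod M₂, v p * v p) := step
    _ = 4 / h^2 * ∑ p : ZMod M₁ × ZMod M₂, v p * v p := by ring

end AuxLemmas

lemma psix_splitlem (h : ℝ) (a u w : GridFun M₁ M₂) (p : ZMod M₁ × ZMod M₂) :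
    psix h a (fun q => (u q + w q) / 2) p
      = psix h a (fun q => u q / 2) p + psix h a (fun q => w q / 2) p := by
  simp only [psix, dhx]; ring

lemma psiy_splitlem (h : ℝ) (a u w : GridFun M₁ M₂) (p : ZMod M₁ × ZMod M₂) :
    psiy h a (fun q => (u q + w q) / 2) p
      = psiy h a (fun q => u q / 2) p + psiy h a (fun q => w q / 2) p := by
  simp only [psiy, dhy]; ring

lemma psih_splitlem (h : ℝ) (a u w : GridFun M₁ M₂) (p : ZMod M₁ × ZMod M₂) :
    psih h a (fun q => (u q + w q) / 2) p
      = psih h a (fun q => u q / 2) p + psih h a (fun q => w q / 2) p := by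
  simp only [psih, dhath, dhx, dhy]; ring

/-- The linear operator describing one time step of the scheme. -/
noncomputable def stepMap (h τ lam : ℝ) (a b c : GridFun M₁ M₂) :
    (GridFun M₁ M₂ × GridFun M₁ M₂ × GridFun M₁ M₂) →ₗ[ℝ]
      (GridFun M₁ M₂ × GridFun M₁ M₂ × GridFun M₁ M₂) where
  toFun s :=
    (fun p => s.1 p / τ + psih h a (fun q => s.1 q / 2) p
        - h ^ 2 / 2 * (psix h b (fun q => s.1 q / 2) p + psiy h c (fun q => s.1 q / 2) p)
        - lam * (s.2.1 p / 2 + s.2.2 p / 2),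
     fun p => s.2.1 p - dxx h s.1 p + h ^ 2 / 12 * dxx h s.2.1 p,
     fun p => s.2.2 p - dyy h s.1 p + h ^ 2 / 12 * dyy h s.2.2 p)
  map_add' s t := by
    refine Prod.ext ?_ (Prod.ext ?_ ?_) <;> funext p <;>
      simp only [psih, psix, psiy, dhath, dhx, dhy, dxx, dyy, Prod.fst_add, Prod.snd_add,
        Pi.add_apply] <;> ring
  map_smul' r s := by
    refine Prod.ext ?_ (Prod.ext ?_ ?_) <;> funext p <;>
      simp only [psih, psix, psiy, dhath, dhx, dhy, dxx, dyy, Prod.smul_fst, Prod.smul_snd,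
        Pi.smul_apply, smul_eq_mul, RingHom.id_apply] <;> ring

set_option maxHeartbeats 1000000 in
lemma stepMap_ker [NeZero M₁] [NeZero M₂] (h τ lam : ℝ) (hh : 0 < h) (hτ : 0 < τ)
    (hlam : 0 < lam) (a b c : GridFun M₁ M₂)
    (s : GridFun M₁ M₂ × GridFun M₁ M₂ × GridFun M₁ M₂)
    (hs : stepMap h τ lam a b c s = 0) : s = 0 := by
  obtain ⟨u, vv, ww⟩ := s
  have E1 : ∀ p, u p / τ + psih h a (fun q => u q / 2) p
      - h ^ 2 / 2 * (psix h b (fun q => u q / 2) p + psiy h c (fun q => u q / 2) p)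
      - lam * (vv p / 2 + ww p / 2) = 0 := by
    intro p
    have := congrFun (congrArg (fun z => z.1) hs) p
    simpa [stepMap] using this
  have E2 : ∀ p, vv p - dxx h u p + h ^ 2 / 12 * dxx h vv p = 0 := by
    intro p
    have := congrFun (congrArg (fun z => z.2.1) hs) p
    simpa [stepMap] using this
  have E3 : ∀ p, ww p - dyy h u p + h ^ 2 / 12 * dyy h ww p = 0 := by
    intro p
    have := congrFun (congrArg (fun z => z.2.2) hs) p
    simpa [stepMap] using this
  have Suu_nonneg : 0 ≤ ∑ p : ZMod M₁ × ZMod M₂, u p * u p :=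
    Finset.sum_nonneg fun p _ => mul_self_nonneg _
  have Svv_nonneg : 0 ≤ ∑ p : ZMod M₁ × ZMod M₂, vv p * vv p :=
    Finset.sum_nonneg fun p _ => mul_self_nonneg _
  have Sww_nonneg : 0 ≤ ∑ p : ZMod M₁ × ZMod M₂, ww p * ww p :=
    Finset.sum_nonneg fun p _ => mul_self_nonneg _
  -- energy identity from the first equation
  have z1 := psih_energy h a (fun q => u q / 2)
  have z2 := psix_energy h b (fun q => u q / 2)
  have z3 := psiy_energy h c (fun q => u q / 2)
  have hA : (1/τ) * (∑ p : ZMod M₁ × ZMod M₂, u p * u p)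
      + (-(lam/2)) * (∑ p : ZMod M₁ × ZMod M₂, vv p * u p)
      + (-(lam/2)) * (∑ p : ZMod M₁ × ZMod M₂, ww p * u p) = 0 := by
    have h0 : ∑ p : ZMod M₁ × ZMod M₂,
        ((u p / τ + psih h a (fun q => u q / 2) p
          - h ^ 2 / 2 * (psix h b (fun q => u q / 2) p + psiy h c (fun q => u q / 2) p)
          - lam * (vv p / 2 + ww p / 2)) * u p) = 0 :=
      Finset.sum_eq_zero fun p _ => by rw [E1 p, zero_mul]
    have hexp : ∑ p : ZMod M₁ × ZMod M₂,
        ((u p / τ + psih h a (fun q => u q / 2) p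
          - h ^ 2 / 2 * (psix h b (fun q => u q / 2) p + psiy h c (fun q => u q / 2) p)
          - lam * (vv p / 2 + ww p / 2)) * u p)
        = ∑ p : ZMod M₁ × ZMod M₂,
          ((1/τ) * (u p * u p)
            + 2 * (psih h a (fun q => u q / 2) p * (u p / 2))
            + (-(h^2)) * (psix h b (fun q => u q / 2) p * (u p / 2))
            + (-(h^2)) * (psiy h c (fun q => u q / 2) p * (u p / 2))
            + (-(lam/2)) * (vv p * u p)
            + (-(lam/2)) * (ww p * u p)) :=
      Finset.sum_congr rfl fun p _ => by ring
    rw [hexp, split6, z1, z2, z3] at h0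
    linarith [h0]
  -- x-direction estimates
  have commx : ∑ p : ZMod M₁ × ZMod M₂, dx h vv p * dx h u p
      = ∑ p : ZMod M₁ × ZMod M₂, dx h u p * dx h vv p :=
    Finset.sum_congr rfl fun p _ => mul_comm _ _
  have hv1 : ∑ p : ZMod M₁ × ZMod M₂, vv p * u p
      = -(∑ p : ZMod M₁ × ZMod M₂, dx h u p * dx h u p)
        + h^2/12 * (∑ p : ZMod M₁ × ZMod M₂, dx h u p * dx h vv p) := by
    have e : ∑ p : ZMod M₁ × ZMod M₂, vv p * u p = ∑ p : ZMod M₁ × ZMod M₂,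
        ((1:ℝ) * (dxx h u p * u p) + (-(h^2/12)) * (dxx h vv p * u p)) :=
      Finset.sum_congr rfl fun p _ => by linear_combination (u p) * (E2 p)
    rw [e, split2, ibpx, ibpx, commx]
    ring
  have hv2 : ∑ p : ZMod M₁ × ZMod M₂, vv p * vv p
      = -(∑ p : ZMod M₁ × ZMod M₂, dx h u p * dx h vv p)
        + h^2/12 * (∑ p : ZMod M₁ × ZMod M₂, dx h vv p * dx h vv p) := by
    have e : ∑ p : ZMod M₁ × ZMod M₂, vv p * vv p = ∑ p : ZMod M₁ × ZMod M₂,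
        ((1:ℝ) * (dxx h u p * vv p) + (-(h^2/12)) * (dxx h vv p * vv p)) :=
      Finset.sum_congr rfl fun p _ => by linear_combination (vv p) * (E2 p)
    rw [e, split2, ibpx, ibpx]
    ring
  have Duux_nonneg : 0 ≤ ∑ p : ZMod M₁ × ZMod M₂, dx h u p * dx h u p :=
    Finset.sum_nonneg fun p _ => mul_self_nonneg _
  have hSvu_le : ∑ p : ZMod M₁ × ZMod M₂, vv p * u p ≤ 0 := by
    have hDuv : ∑ p : ZMod M₁ × ZMod M₂, dx h u p * dx h vv p
        = h^2/12 * (∑ p : ZMod M₁ × ZMod M₂, dx h vv p * dx h vv p)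
          - ∑ p : ZMod M₁ × ZMod M₂, vv p * vv p := by linarith [hv2]
    have m1 : h^2/12 * (h^2/12 * (∑ p : ZMod M₁ × ZMod M₂, dx h vv p * dx h vv p))
        ≤ h^2/12 * (h^2/12 * (4/h^2 * ∑ p : ZMod M₁ × ZMod M₂, vv p * vv p)) :=
      mul_le_mul_of_nonneg_left
        (mul_le_mul_of_nonneg_left (invx h hh vv) (by positivity)) (by positivity)
    have m2 : h^2/12 * (h^2/12 * (4/h^2 * ∑ p : ZMod M₁ × ZMod M₂, vv p * vv p))
        = h^2/36 * ∑ p : ZMod M₁ × ZMod M₂, vv p * vv p := by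
      field_simp
      ring
    have m3 : h^2/36 * (∑ p : ZMod M₁ × ZMod M₂, vv p * vv p)
        ≤ h^2/12 * (∑ p : ZMod M₁ × ZMod M₂, vv p * vv p) := by
      have : 0 ≤ h^2 * ∑ p : ZMod M₁ × ZMod M₂, vv p * vv p := by
        positivity
      linarith
    have final : ∑ p : ZMod M₁ × ZMod M₂, vv p * u p
        = -(∑ p : ZMod M₁ × ZMod M₂, dx h u p * dx h u p)
          + h^2/12 * (h^2/12 * (∑ p : ZMod M₁ × ZMod M₂, dx h vv p * dx h vv p)
            - ∑ p : ZMod M₁ × ZMod M₂, vv p * vv p) := by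
      rw [← hDuv]; exact hv1
    have expand : h^2/12 * (h^2/12 * (∑ p : ZMod M₁ × ZMod M₂, dx h vv p * dx h vv p)
          - ∑ p : ZMod M₁ × ZMod M₂, vv p * vv p)
        = h^2/12 * (h^2/12 * (∑ p : ZMod M₁ × ZMod M₂, dx h vv p * dx h vv p))
          - h^2/12 * (∑ p : ZMod M₁ × ZMod M₂, vv p * vv p) := by ring
    linarith [m1, m3, Duux_nonneg, final, expand, m2.le, m2.ge]
  -- y-direction estimates
  have commy : ∑ p : ZMod M₁ × ZMod M₂, dy h ww p * dy h u p
      = ∑ p : ZMod M₁ × ZMod M₂, dy h u p * dy h ww p :=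
    Finset.sum_congr rfl fun p _ => mul_comm _ _
  have hw1 : ∑ p : ZMod M₁ × ZMod M₂, ww p * u p
      = -(∑ p : ZMod M₁ × ZMod M₂, dy h u p * dy h u p)
        + h^2/12 * (∑ p : ZMod M₁ × ZMod M₂, dy h u p * dy h ww p) := by
    have e : ∑ p : ZMod M₁ × ZMod M₂, ww p * u p = ∑ p : ZMod M₁ × ZMod M₂,
        ((1:ℝ) * (dyy h u p * u p) + (-(h^2/12)) * (dyy h ww p * u p)) :=
      Finset.sum_congr rfl fun p _ => by linear_combination (u p) * (E3 p)
    rw [e, split2, ibpy, ibpy, commy]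
    ring
  have hw2 : ∑ p : ZMod M₁ × ZMod M₂, ww p * ww p
      = -(∑ p : ZMod M₁ × ZMod M₂, dy h u p * dy h ww p)
        + h^2/12 * (∑ p : ZMod M₁ × ZMod M₂, dy h ww p * dy h ww p) := by
    have e : ∑ p : ZMod M₁ × ZMod M₂, ww p * ww p = ∑ p : ZMod M₁ × ZMod M₂,
        ((1:ℝ) * (dyy h u p * ww p) + (-(h^2/12)) * (dyy h ww p * ww p)) :=
      Finset.sum_congr rfl fun p _ => by linear_combination (ww p) * (E3 p)
    rw [e, split2, ibpy, ibpy]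
    ring
  have Duuy_nonneg : 0 ≤ ∑ p : ZMod M₁ × ZMod M₂, dy h u p * dy h u p :=
    Finset.sum_nonneg fun p _ => mul_self_nonneg _
  have hSwu_le : ∑ p : ZMod M₁ × ZMod M₂, ww p * u p ≤ 0 := by
    have hDuv : ∑ p : ZMod M₁ × ZMod M₂, dy h u p * dy h ww p
        = h^2/12 * (∑ p : ZMod M₁ × ZMod M₂, dy h ww p * dy h ww p)
          - ∑ p : ZMod M₁ × ZMod M₂, ww p * ww p := by linarith [hw2]
    have m1 : h^2/12 * (h^2/12 * (∑ p : ZMod M₁ × ZMod M₂, dy h ww p * dy h ww p))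
        ≤ h^2/12 * (h^2/12 * (4/h^2 * ∑ p : ZMod M₁ × ZMod M₂, ww p * ww p)) :=
      mul_le_mul_of_nonneg_left
        (mul_le_mul_of_nonneg_left (invy h hh ww) (by positivity)) (by positivity)
    have m2 : h^2/12 * (h^2/12 * (4/h^2 * ∑ p : ZMod M₁ × ZMod M₂, ww p * ww p))
        = h^2/36 * ∑ p : ZMod M₁ × ZMod M₂, ww p * ww p := by
      field_simp
      ring
    have m3 : h^2/36 * (∑ p : ZMod M₁ × ZMod M₂, ww p * ww p)
        ≤ h^2/12 * (∑ p : ZMod M₁ × ZMod M₂, ww p * ww p) := by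
      have : 0 ≤ h^2 * ∑ p : ZMod M₁ × ZMod M₂, ww p * ww p := by
        positivity
      linarith
    have final : ∑ p : ZMod M₁ × ZMod M₂, ww p * u p
        = -(∑ p : ZMod M₁ × ZMod M₂, dy h u p * dy h u p)
          + h^2/12 * (h^2/12 * (∑ p : ZMod M₁ × ZMod M₂, dy h ww p * dy h ww p)
            - ∑ p : ZMod M₁ × ZMod M₂, ww p * ww p) := by
      rw [← hDuv]; exact hw1
    have expand : h^2/12 * (h^2/12 * (∑ p : ZMod M₁ × ZMod M₂, dy h ww p * dy h ww p)
          - ∑ p : ZMod M₁ × ZMod M₂, ww p * ww p)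
        = h^2/12 * (h^2/12 * (∑ p : ZMod M₁ × ZMod M₂, dy h ww p * dy h ww p))
          - h^2/12 * (∑ p : ZMod M₁ × ZMod M₂, ww p * ww p) := by ring
    linarith [m1, m3, Duuy_nonneg, final, expand, m2.le, m2.ge]
  -- conclude u = 0
  have hSuu0 : ∑ p : ZMod M₁ × ZMod M₂, u p * u p = 0 := by
    have h1 : (1/τ) * (∑ p : ZMod M₁ × ZMod M₂, u p * u p) ≤ 0 := by
      nlinarith [hA, hSvu_le, hSwu_le, hlam]
    have h2 : ∑ p : ZMod M₁ × ZMod M₂, u p * u p ≤ 0 := by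
      by_contra hc
      push_neg at hc
      have : 0 < (1/τ) * (∑ p : ZMod M₁ × ZMod M₂, u p * u p) := by positivity
      linarith
    linarith
  have hu : ∀ p, u p = 0 := fun p =>
    mul_self_eq_zero.mp
      ((Finset.sum_eq_zero_iff_of_nonneg (fun p _ => mul_self_nonneg (u p))).mp hSuu0 p
        (Finset.mem_univ p))
  -- conclude vv = 0
  have hvv : ∀ p, vv p = 0 := by
    have E2' : ∀ p, vv p = -(h^2/12) * dxx h vv p := by
      intro p
      have hd : dxx h u p = 0 := by simp [dxx, hu]
      have := E2 p
      rw [hd] at this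
      linarith
    have e : ∑ p : ZMod M₁ × ZMod M₂, vv p * vv p
        = ∑ p : ZMod M₁ × ZMod M₂, ((-(h^2/12)) * (dxx h vv p * vv p)) :=
      Finset.sum_congr rfl fun p _ => by linear_combination (vv p) * (E2' p)
    rw [← Finset.mul_sum, ibpx] at e
    have e2 : ∑ p : ZMod M₁ × ZMod M₂, vv p * vv p
        = h^2/12 * (∑ p : ZMod M₁ × ZMod M₂, dx h vv p * dx h vv p) := by
      rw [e]; ring
    have m1 : h^2/12 * (∑ p : ZMod M₁ × ZMod M₂, dx h vv p * dx h vv p)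
        ≤ h^2/12 * (4/h^2 * ∑ p : ZMod M₁ × ZMod M₂, vv p * vv p) :=
      mul_le_mul_of_nonneg_left (invx h hh vv) (by positivity)
    have m2 : h^2/12 * (4/h^2 * ∑ p : ZMod M₁ × ZMod M₂, vv p * vv p)
        = (∑ p : ZMod M₁ × ZMod M₂, vv p * vv p)/3 := by
      field_simp
      ring
    have hle : ∑ p : ZMod M₁ × ZMod M₂, vv p * vv p
        ≤ (∑ p : ZMod M₁ × ZMod M₂, vv p * vv p)/3 := by
      linarith [e2, m1, m2]
    have hSvv0 : ∑ p : ZMod M₁ × ZMod M₂, vv p * vv p = 0 := by linarith [Svv_nonneg]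
    exact fun p =>
      mul_self_eq_zero.mp
        ((Finset.sum_eq_zero_iff_of_nonneg (fun p _ => mul_self_nonneg (vv p))).mp hSvv0 p
          (Finset.mem_univ p))
  -- conclude ww = 0
  have hww : ∀ p, ww p = 0 := by
    have E3' : ∀ p, ww p = -(h^2/12) * dyy h ww p := by
      intro p
      have hd : dyy h u p = 0 := by simp [dyy, hu]
      have := E3 p
      rw [hd] at this
      linarith
    have e : ∑ p : ZMod M₁ × ZMod M₂, ww p * ww p
        = ∑ p : ZMod M₁ × ZMod M₂, ((-(h^2/12)) * (dyy h ww p * ww p)) :=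
      Finset.sum_congr rfl fun p _ => by linear_combination (ww p) * (E3' p)
    rw [← Finset.mul_sum, ibpy] at e
    have e2 : ∑ p : ZMod M₁ × ZMod M₂, ww p * ww p
        = h^2/12 * (∑ p : ZMod M₁ × ZMod M₂, dy h ww p * dy h ww p) := by
      rw [e]; ring
    have m1 : h^2/12 * (∑ p : ZMod M₁ × ZMod M₂, dy h ww p * dy h ww p)
        ≤ h^2/12 * (4/h^2 * ∑ p : ZMod M₁ × ZMod M₂, ww p * ww p) :=
      mul_le_mul_of_nonneg_left (invy h hh ww) (by positivity)
    have m2 : h^2/12 * (4/h^2 * ∑ p : ZMod M₁ × ZMod M₂, ww p * ww p)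
        = (∑ p : ZMod M₁ × ZMod M₂, ww p * ww p)/3 := by
      field_simp
      ring
    have hle : ∑ p : ZMod M₁ × ZMod M₂, ww p * ww p
        ≤ (∑ p : ZMod M₁ × ZMod M₂, ww p * ww p)/3 := by
      linarith [e2, m1, m2]
    have hSww0 : ∑ p : ZMod M₁ × ZMod M₂, ww p * ww p = 0 := by linarith [Sww_nonneg]
    exact fun p =>
      mul_self_eq_zero.mp
        ((Finset.sum_eq_zero_iff_of_nonneg (fun p _ => mul_self_nonneg (ww p))).mp hSww0 p
          (Finset.mem_univ p))
  refine Prod.ext ?_ (Prod.ext ?_ ?_) <;> funext p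
  · simpa using hu p
  · simpa using hvv p
  · simpa using hww p

set_option maxHeartbeats 1000000 in
lemma system_iff [NeZero M₁] [NeZero M₂] (h τ lam : ℝ)
    (a b c u₀ v₀ w₀ : GridFun M₁ M₂)
    (s : GridFun M₁ M₂ × GridFun M₁ M₂ × GridFun M₁ M₂) :
    ((∀ p, (s.1 p - u₀ p) / τ
          + psih h a (fun q => (s.1 q + u₀ q) / 2) p
          - h ^ 2 / 2 * (psix h b (fun q => (s.1 q + u₀ q) / 2) p
              + psiy h c (fun q => (s.1 q + u₀ q) / 2) p)
        = lam * ((s.2.1 p + v₀ p) / 2 + (s.2.2 p + w₀ p) / 2)) ∧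
      (∀ p, s.2.1 p = dxx h s.1 p - h ^ 2 / 12 * dxx h s.2.1 p) ∧
      (∀ p, s.2.2 p = dyy h s.1 p - h ^ 2 / 12 * dyy h s.2.2 p))
    ↔ stepMap h τ lam a b c s =
        ((fun p => u₀ p / τ - psih h a (fun q => u₀ q / 2) p
            + h ^ 2 / 2 * (psix h b (fun q => u₀ q / 2) p + psiy h c (fun q => u₀ q / 2) p)
            + lam * (v₀ p / 2 + w₀ p / 2) : GridFun M₁ M₂),
          (fun _ => 0 : GridFun M₁ M₂), (fun _ => 0 : GridFun M₁ M₂)) := by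
  constructor
  · rintro ⟨h1, h2, h3⟩
    refine Prod.ext ?_ (Prod.ext ?_ ?_) <;> funext p <;>
      simp only [stepMap, LinearMap.coe_mk, AddHom.coe_mk]
    · have e1 := psih_splitlem h a s.1 u₀ p
      have e2 := psix_splitlem h b s.1 u₀ p
      have e3 := psiy_splitlem h c s.1 u₀ p
      linear_combination (h1 p) - e1 + (h^2/2) * e2 + (h^2/2) * e3
    · linear_combination h2 p
    · linear_combination h3 p
  · intro hs
    have c1 : ∀ p, (stepMap h τ lam a b c s).1 p
        = u₀ p / τ - psih h a (fun q => u₀ q / 2) p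
            + h ^ 2 / 2 * (psix h b (fun q => u₀ q / 2) p + psiy h c (fun q => u₀ q / 2) p)
            + lam * (v₀ p / 2 + w₀ p / 2) :=
      fun p => congrFun (congrArg (fun z => z.1) hs) p
    have c2 : ∀ p, (stepMap h τ lam a b c s).2.1 p = 0 :=
      fun p => congrFun (congrArg (fun z => z.2.1) hs) p
    have c3 : ∀ p, (stepMap h τ lam a b c s).2.2 p = 0 :=
      fun p => congrFun (congrArg (fun z => z.2.2) hs) p
    simp only [stepMap, LinearMap.coe_mk, AddHom.coe_mk] at c1 c2 c3
    refine ⟨fun p => ?_, fun p => ?_, fun p => ?_⟩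
    · have e1 := psih_splitlem h a s.1 u₀ p
      have e2 := psix_splitlem h b s.1 u₀ p
      have e3 := psiy_splitlem h c s.1 u₀ p
      linear_combination (c1 p) + e1 - (h^2/2) * e2 - (h^2/2) * e3
    · linear_combination c2 p
    · linear_combination c3 p


set_option maxHeartbeats 1000000 in
/-- Unique solvability of one time step of the fine-grid linearized compact scheme. -/
theorem fine_grid_step_unique_solvability [NeZero M₁] [NeZero M₂]
    (h τ lam : ℝ) (hh : 0 < h) (hτ : 0 < τ) (hlam : 0 < lam)
    (a b c u₀ v₀ w₀ : GridFun M₁ M₂) :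
    ∃! s : GridFun M₁ M₂ × GridFun M₁ M₂ × GridFun M₁ M₂,
      (∀ p, (s.1 p - u₀ p) / τ
          + psih h a (fun q => (s.1 q + u₀ q) / 2) p
          - h ^ 2 / 2 * (psix h b (fun q => (s.1 q + u₀ q) / 2) p
              + psiy h c (fun q => (s.1 q + u₀ q) / 2) p)
        = lam * ((s.2.1 p + v₀ p) / 2 + (s.2.2 p + w₀ p) / 2)) ∧
      (∀ p, s.2.1 p = dxx h s.1 p - h ^ 2 / 12 * dxx h s.2.1 p) ∧
      (∀ p, s.2.2 p = dyy h s.1 p - h ^ 2 / 12 * dyy h s.2.2 p) := by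
  have hinj : Function.Injective (stepMap (M₁ := M₁) (M₂ := M₂) h τ lam a b c) := by
    rw [← LinearMap.ker_eq_bot, LinearMap.ker_eq_bot']
    exact fun m hm => stepMap_ker h τ lam hh hτ hlam a b c m hm
  have hsurj : Function.Surjective (stepMap (M₁ := M₁) (M₂ := M₂) h τ lam a b c) :=
    LinearMap.surjective_of_injective hinj
  obtain ⟨s, hsR⟩ := hsurj
    ((fun p => u₀ p / τ - psih h a (fun q => u₀ q / 2) p
        + h ^ 2 / 2 * (psix h b (fun q => u₀ q / 2) p + psiy h c (fun q => u₀ q / 2) p)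
        + lam * (v₀ p / 2 + w₀ p / 2) : GridFun M₁ M₂),
      (fun _ => 0 : GridFun M₁ M₂), (fun _ => 0 : GridFun M₁ M₂))
  refine ⟨s, (system_iff h τ lam a b c u₀ v₀ w₀ s).mpr hsR, fun y hy => ?_⟩
  exact hinj (((system_iff h τ lam a b c u₀ v₀ w₀ y).mp hy).trans hsR.symm)
end

section
/- Unconditional stability of the fine-grid correction stage: let N ≥ 1, 0 < τ ≤ 1, λ > 0. Let a, b, c, ε : Fin (N+1) → (periodic grid functions on the M₁×M₂ periodic grid with step size h > 0) be given data indexed by the time steps 1,…,N, let η be a periodic grid function, and let û, v̂, ŵ : Fin (N+1) → (periodic grid functions) satisfy: (i) û^0 = η; (ii) for every n with 1 ≤ n ≤ N, writing ubar = (û^n + û^{n−1})/2, vbar = (v̂^n + v̂^{n−1})/2, wbar = (ŵ^n + ŵ^{n−1})/2, the perturbed equation (û^n − û^{n−1})/τ + ψh(a^n, ubar) − (h²/2)·(ψx(b^n, ubar) + ψy(c^n, ubar)) = λ·(vbar + wbar) + ε^n holds at every grid point; and (iii) for every n with 0 ≤ n ≤ N, v̂^n = δxx û^n − (h²/12)·δxx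 v̂^n and ŵ^n = δyy û^n − (h²/12)·δyy ŵ^n at every grid point. Then for every m with 1 ≤ m ≤ N, ‖û^m‖² ≤ exp(2·m·τ) · (2·‖η‖² + 2·τ·Σ_{n=1}^{m} ‖ε^n‖²). -/
open Real Finset Asymptotics

variable {M₁ M₂ : ℕ}

section Aux
variable [NeZero M₁] [NeZero M₂]

/-- Shift invariance of the double sum. -/
lemma dsum_shift (f : GridFun M₁ M₂) (k : ZMod M₁) (l : ZMod M₂) :
    ∑ a : ZMod M₁, ∑ b : ZMod M₂, f (a + k, b + l) = ∑ a : ZMod M₁, ∑ b : ZMod M₂, f (a, b) := by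
  calc ∑ a : ZMod M₁, ∑ b : ZMod M₂, f (a + k, b + l)
      = ∑ a : ZMod M₁, ∑ b : ZMod M₂, f (a, b + l) :=
        Fintype.sum_equiv (Equiv.addRight k) _ _ (fun a => rfl)
    _ = ∑ a : ZMod M₁, ∑ b : ZMod M₂, f (a, b) :=
        Finset.sum_congr rfl fun a _ => Fintype.sum_equiv (Equiv.addRight l) _ _ (fun b => rfl)

lemma gip_nonneg (h : ℝ) (v : GridFun M₁ M₂) : 0 ≤ gip h v v := by
  unfold gip
  exact mul_nonneg (sq_nonneg h) (Finset.sum_nonneg fun a _ =>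
    Finset.sum_nonneg fun b _ => mul_self_nonneg _)

lemma gnorm_sq (h : ℝ) (v : GridFun M₁ M₂) : gnorm h v ^ 2 = gip h v v :=
  Real.sq_sqrt (gip_nonneg h v)

lemma gip_congr {h : ℝ} {f g f' g' : GridFun M₁ M₂} (H : ∀ p, f p * g p = f' p * g' p) :
    gip h f g = gip h f' g' := by
  unfold gip
  exact congrArg _ (Finset.sum_congr rfl fun a _ => Finset.sum_congr rfl fun b _ => H (a, b))

lemma gip_comm (h : ℝ) (f g : GridFun M₁ M₂) : gip h f g = gip h g f :=
  gip_congr fun p => mul_comm _ _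

lemma gip_add_left (h : ℝ) (f g w : GridFun M₁ M₂) :
    gip h (fun p => f p + g p) w = gip h f w + gip h g w := by
  unfold gip
  simp only [add_mul, Finset.sum_add_distrib, mul_add]

lemma gip_sub_left (h : ℝ) (f g w : GridFun M₁ M₂) :
    gip h (fun p => f p - g p) w = gip h f w - gip h g w := by
  unfold gip
  simp only [sub_mul, Finset.sum_sub_distrib, mul_sub]

lemma gip_smul_left (h c : ℝ) (f w : GridFun M₁ M₂) :
    gip h (fun p => c * f p) w = c * gip h f w := by
  unfold gip
  simp only [mul_assoc, ← Finset.mul_sum]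
  ring

lemma gip_two_mul_le (h : ℝ) (f g : GridFun M₁ M₂) :
    2 * gip h f g ≤ gip h f f + gip h g g := by
  have h0 : 0 ≤ gip h (fun p => f p - g p) (fun p => f p - g p) := gip_nonneg _ _
  have e1 : gip h (fun p => f p - g p) (fun p => f p - g p)
      = gip h f f - 2 * gip h f g + gip h g g := by
    rw [gip_sub_left, gip_comm h f fun p => f p - g p, gip_comm h g fun p => f p - g p,
      gip_sub_left, gip_sub_left, gip_comm h g f]
    ring
  linarith

lemma gip_dhx_skew (h : ℝ) (f g : GridFun M₁ M₂) :
    gip h (dhx h f) g = - gip h f (dhx h g) := by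
  have h1 : (∑ a : ZMod M₁, ∑ b : ZMod M₂, f (a + 1, b) * g (a, b))
      = ∑ a : ZMod M₁, ∑ b : ZMod M₂, f (a, b) * g (a - 1, b) := by
    simpa using dsum_shift (fun p => f p * g (p.1 - 1, p.2)) 1 0
  have h2 : (∑ a : ZMod M₁, ∑ b : ZMod M₂, f (a - 1, b) * g (a, b))
      = ∑ a : ZMod M₁, ∑ b : ZMod M₂, f (a, b) * g (a + 1, b) := by
    simpa [sub_eq_add_neg] using dsum_shift (fun p => f p * g (p.1 + 1, p.2)) (-1) 0
  have key : (∑ a : ZMod M₁, ∑ b : ZMod M₂, (f (a + 1, b) - f (a - 1, b)) * g (a, b))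
      = - ∑ a : ZMod M₁, ∑ b : ZMod M₂, f (a, b) * (g (a + 1, b) - g (a - 1, b)) := by
    simp only [sub_mul, mul_sub, Finset.sum_sub_distrib]
    rw [h1, h2]; ring
  unfold gip dhx
  simp only [div_mul_eq_mul_div, ← mul_div_assoc, ← Finset.sum_div]
  rw [key]; ring

lemma gip_dhy_skew (h : ℝ) (f g : GridFun M₁ M₂) :
    gip h (dhy h f) g = - gip h f (dhy h g) := by
  have h1 : (∑ a : ZMod M₁, ∑ b : ZMod M₂, f (a, b + 1) * g (a, b))
      = ∑ a : ZMod M₁, ∑ b : ZMod M₂, f (a, b) * g (a, b - 1) := by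
    simpa using dsum_shift (fun p => f p * g (p.1, p.2 - 1)) 0 1
  have h2 : (∑ a : ZMod M₁, ∑ b : ZMod M₂, f (a, b - 1) * g (a, b))
      = ∑ a : ZMod M₁, ∑ b : ZMod M₂, f (a, b) * g (a, b + 1) := by
    simpa [sub_eq_add_neg] using dsum_shift (fun p => f p * g (p.1, p.2 + 1)) 0 (-1)
  have key : (∑ a : ZMod M₁, ∑ b : ZMod M₂, (f (a, b + 1) - f (a, b - 1)) * g (a, b))
      = - ∑ a : ZMod M₁, ∑ b : ZMod M₂, f (a, b) * (g (a, b + 1) - g (a, b - 1)) := by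
    simp only [sub_mul, mul_sub, Finset.sum_sub_distrib]
    rw [h1, h2]; ring
  unfold gip dhy
  simp only [div_mul_eq_mul_div, ← mul_div_assoc, ← Finset.sum_div]
  rw [key]; ring

lemma gip_dxx (h : ℝ) (hh : h ≠ 0) (f g : GridFun M₁ M₂) :
    gip h (dxx h f) g = - gip h (dx h f) (dx h g) := by
  have h2 : (∑ a : ZMod M₁, ∑ b : ZMod M₂, f (a - 1, b) * g (a, b))
      = ∑ a : ZMod M₁, ∑ b : ZMod M₂, f (a, b) * g (a + 1, b) := by
    simpa [sub_eq_add_neg] using dsum_shift (fun p => f p * g (p.1 + 1, p.2)) (-1) 0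
  have h3 : (∑ a : ZMod M₁, ∑ b : ZMod M₂, f (a + 1, b) * g (a + 1, b))
      = ∑ a : ZMod M₁, ∑ b : ZMod M₂, f (a, b) * g (a, b) := by
    simpa using dsum_shift (fun p => f p * g p) 1 0
  have key : (∑ a : ZMod M₁, ∑ b : ZMod M₂, (f (a + 1, b) - 2 * f (a, b) + f (a - 1, b)) * g (a, b))
      = - ∑ a : ZMod M₁, ∑ b : ZMod M₂, (f (a + 1, b) - f (a, b)) * (g (a + 1, b) - g (a, b)) := by
    simp only [sub_mul, add_mul, mul_sub, two_mul, Finset.sum_sub_distrib, Finset.sum_add_distrib]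
    rw [h2, h3]; ring
  unfold gip dxx dx
  simp only [div_mul_eq_mul_div, ← mul_div_assoc, ← Finset.sum_div]
  rw [key]
  field_simp

lemma gip_dyy (h : ℝ) (hh : h ≠ 0) (f g : GridFun M₁ M₂) :
    gip h (dyy h f) g = - gip h (dy h f) (dy h g) := by
  have h2 : (∑ a : ZMod M₁, ∑ b : ZMod M₂, f (a, b - 1) * g (a, b))
      = ∑ a : ZMod M₁, ∑ b : ZMod M₂, f (a, b) * g (a, b + 1) := by
    simpa [sub_eq_add_neg] using dsum_shift (fun p => f p * g (p.1, p.2 + 1)) 0 (-1)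
  have h3 : (∑ a : ZMod M₁, ∑ b : ZMod M₂, f (a, b + 1) * g (a, b + 1))
      = ∑ a : ZMod M₁, ∑ b : ZMod M₂, f (a, b) * g (a, b) := by
    simpa using dsum_shift (fun p => f p * g p) 0 1
  have key : (∑ a : ZMod M₁, ∑ b : ZMod M₂, (f (a, b + 1) - 2 * f (a, b) + f (a, b - 1)) * g (a, b))
      = - ∑ a : ZMod M₁, ∑ b : ZMod M₂, (f (a, b + 1) - f (a, b)) * (g (a, b + 1) - g (a, b)) := by
    simp only [sub_mul, add_mul, mul_sub, two_mul, Finset.sum_sub_distrib, Finset.sum_add_distrib]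
    rw [h2, h3]; ring
  unfold gip dyy dy
  simp only [div_mul_eq_mul_div, ← mul_div_assoc, ← Finset.sum_div]
  rw [key]
  field_simp

lemma dx_inverse (h : ℝ) (hh : h ≠ 0) (v : GridFun M₁ M₂) :
    h ^ 2 * gip h (dx h v) (dx h v) ≤ 4 * gip h v v := by
  have h3 : (∑ a : ZMod M₁, ∑ b : ZMod M₂, v (a + 1, b) * v (a + 1, b))
      = ∑ a : ZMod M₁, ∑ b : ZMod M₂, v (a, b) * v (a, b) := by
    simpa using dsum_shift (fun p => v p * v p) 1 0
  have key : (∑ a : ZMod M₁, ∑ b : ZMod M₂, (v (a + 1, b) - v (a, b)) * (v (a + 1, b) - v (a, b)))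
      ≤ 4 * ∑ a : ZMod M₁, ∑ b : ZMod M₂, v (a, b) * v (a, b) := by
    have step1 : (∑ a : ZMod M₁, ∑ b : ZMod M₂, (v (a + 1, b) - v (a, b)) * (v (a + 1, b) - v (a, b)))
        ≤ ∑ a : ZMod M₁, ∑ b : ZMod M₂,
            (2 * (v (a + 1, b) * v (a + 1, b)) + 2 * (v (a, b) * v (a, b))) := by
      refine Finset.sum_le_sum fun a _ => Finset.sum_le_sum fun b _ => ?_
      nlinarith [sq_nonneg (v (a + 1, b) + v (a, b))]
    have step2 : (∑ a : ZMod M₁, ∑ b : ZMod M₂,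
          (2 * (v (a + 1, b) * v (a + 1, b)) + 2 * (v (a, b) * v (a, b))))
        = 2 * (∑ a : ZMod M₁, ∑ b : ZMod M₂, v (a + 1, b) * v (a + 1, b))
          + 2 * ∑ a : ZMod M₁, ∑ b : ZMod M₂, v (a, b) * v (a, b) := by
      simp only [Finset.sum_add_distrib, Finset.mul_sum]
    rw [step2, h3] at step1; linarith
  unfold gip dx
  simp only [div_mul_div_comm, ← Finset.sum_div]
  have e : ∀ S : ℝ, h ^ 2 * (h ^ 2 * (S / (h * h))) = h ^ 2 * S := fun S => by
    field_simp
  rw [e]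
  calc h ^ 2 * ∑ a : ZMod M₁, ∑ b : ZMod M₂, (v (a + 1, b) - v (a, b)) * (v (a + 1, b) - v (a, b))
      ≤ h ^ 2 * (4 * ∑ a : ZMod M₁, ∑ b : ZMod M₂, v (a, b) * v (a, b)) :=
        mul_le_mul_of_nonneg_left key (sq_nonneg h)
    _ = 4 * (h ^ 2 * ∑ a : ZMod M₁, ∑ b : ZMod M₂, v (a, b) * v (a, b)) := by ring

lemma dy_inverse (h : ℝ) (hh : h ≠ 0) (v : GridFun M₁ M₂) :
    h ^ 2 * gip h (dy h v) (dy h v) ≤ 4 * gip h v v := by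
  have h3 : (∑ a : ZMod M₁, ∑ b : ZMod M₂, v (a, b + 1) * v (a, b + 1))
      = ∑ a : ZMod M₁, ∑ b : ZMod M₂, v (a, b) * v (a, b) := by
    simpa using dsum_shift (fun p => v p * v p) 0 1
  have key : (∑ a : ZMod M₁, ∑ b : ZMod M₂, (v (a, b + 1) - v (a, b)) * (v (a, b + 1) - v (a, b)))
      ≤ 4 * ∑ a : ZMod M₁, ∑ b : ZMod M₂, v (a, b) * v (a, b) := by
    have step1 : (∑ a : ZMod M₁, ∑ b : ZMod M₂, (v (a, b + 1) - v (a, b)) * (v (a, b + 1) - v (a, b)))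
        ≤ ∑ a : ZMod M₁, ∑ b : ZMod M₂,
            (2 * (v (a, b + 1) * v (a, b + 1)) + 2 * (v (a, b) * v (a, b))) := by
      refine Finset.sum_le_sum fun a _ => Finset.sum_le_sum fun b _ => ?_
      nlinarith [sq_nonneg (v (a, b + 1) + v (a, b))]
    have step2 : (∑ a : ZMod M₁, ∑ b : ZMod M₂,
          (2 * (v (a, b + 1) * v (a, b + 1)) + 2 * (v (a, b) * v (a, b))))
        = 2 * (∑ a : ZMod M₁, ∑ b : ZMod M₂, v (a, b + 1) * v (a, b + 1))
          + 2 * ∑ a : ZMod M₁, ∑ b : ZMod M₂, v (a, b) * v (a, b) := by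
      simp only [Finset.sum_add_distrib, Finset.mul_sum]
    rw [step2, h3] at step1; linarith
  unfold gip dy
  simp only [div_mul_div_comm, ← Finset.sum_div]
  have e : ∀ S : ℝ, h ^ 2 * (h ^ 2 * (S / (h * h))) = h ^ 2 * S := fun S => by
    field_simp
  rw [e]
  calc h ^ 2 * ∑ a : ZMod M₁, ∑ b : ZMod M₂, (v (a, b + 1) - v (a, b)) * (v (a, b + 1) - v (a, b))
      ≤ h ^ 2 * (4 * ∑ a : ZMod M₁, ∑ b : ZMod M₂, v (a, b) * v (a, b)) :=
        mul_le_mul_of_nonneg_left key (sq_nonneg h)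
    _ = 4 * (h ^ 2 * ∑ a : ZMod M₁, ∑ b : ZMod M₂, v (a, b) * v (a, b)) := by ring

lemma gip_psix_self (h : ℝ) (bb w : GridFun M₁ M₂) : gip h (psix h bb w) w = 0 := by
  have A : gip h (dhx h (fun q => bb q * w q)) w
      = - gip h (fun q => bb q * w q) (dhx h w) := gip_dhx_skew h _ _
  have B : gip h (fun p => bb p * dhx h w p) w
      = gip h (fun q => bb q * w q) (dhx h w) := gip_congr fun p => by ring
  calc gip h (psix h bb w) w
      = (1 / 3 : ℝ) * gip h (fun p => bb p * dhx h w p + dhx h (fun q => bb q * w q) p) w :=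
        gip_smul_left h (1 / 3) _ w
    _ = (1 / 3 : ℝ) * (gip h (fun p => bb p * dhx h w p) w
          + gip h (dhx h (fun q => bb q * w q)) w) := by
        rw [gip_add_left h (fun p => bb p * dhx h w p) (dhx h (fun q => bb q * w q)) w]
    _ = 0 := by rw [A, B]; ring

lemma gip_psiy_self (h : ℝ) (cc w : GridFun M₁ M₂) : gip h (psiy h cc w) w = 0 := by
  have A : gip h (dhy h (fun q => cc q * w q)) w
      = - gip h (fun q => cc q * w q) (dhy h w) := gip_dhy_skew h _ _
  have B : gip h (fun p => cc p * dhy h w p) w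
      = gip h (fun q => cc q * w q) (dhy h w) := gip_congr fun p => by ring
  calc gip h (psiy h cc w) w
      = (1 / 3 : ℝ) * gip h (fun p => cc p * dhy h w p + dhy h (fun q => cc q * w q) p) w :=
        gip_smul_left h (1 / 3) _ w
    _ = (1 / 3 : ℝ) * (gip h (fun p => cc p * dhy h w p) w
          + gip h (dhy h (fun q => cc q * w q)) w) := by
        rw [gip_add_left h (fun p => cc p * dhy h w p) (dhy h (fun q => cc q * w q)) w]
    _ = 0 := by rw [A, B]; ring

lemma gip_psih_self (h : ℝ) (aa w : GridFun M₁ M₂) : gip h (psih h aa w) w = 0 := by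
  have Ax : gip h (dhx h (fun q => aa q * w q)) w
      = - gip h (fun q => aa q * w q) (dhx h w) := gip_dhx_skew h _ _
  have Ay : gip h (dhy h (fun q => aa q * w q)) w
      = - gip h (fun q => aa q * w q) (dhy h w) := gip_dhy_skew h _ _
  have Bx : gip h (fun p => aa p * dhx h w p) w
      = gip h (fun q => aa q * w q) (dhx h w) := gip_congr fun p => by ring
  have By : gip h (fun p => aa p * dhy h w p) w
      = gip h (fun q => aa q * w q) (dhy h w) := gip_congr fun p => by ring
  calc gip h (psih h aa w) w
      = (1 / 3 : ℝ) * gip h (fun p => aa p * dhath h w p + dhath h (fun q => aa q * w q) p) w :=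
        gip_smul_left h (1 / 3) _ w
    _ = (1 / 3 : ℝ) * gip h (fun p => (aa p * dhx h w p + aa p * dhy h w p)
          + (dhx h (fun q => aa q * w q) p + dhy h (fun q => aa q * w q) p)) w := by
        rw [gip_congr (g' := w) (fun p => ?_)]
        unfold dhath; ring
    _ = (1 / 3 : ℝ) * (gip h (fun p => aa p * dhx h w p + aa p * dhy h w p) w
          + gip h (fun p => dhx h (fun q => aa q * w q) p + dhy h (fun q => aa q * w q) p) w) := by
        rw [gip_add_left h (fun p => aa p * dhx h w p + aa p * dhy h w p)
          (fun p => dhx h (fun q => aa q * w q) p + dhy h (fun q => aa q * w q) p) w]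
    _ = (1 / 3 : ℝ) * ((gip h (fun p => aa p * dhx h w p) w + gip h (fun p => aa p * dhy h w p) w)
          + (gip h (dhx h (fun q => aa q * w q)) w + gip h (dhy h (fun q => aa q * w q)) w)) := by
        rw [gip_add_left h (fun p => aa p * dhx h w p) (fun p => aa p * dhy h w p) w,
          gip_add_left h (dhx h (fun q => aa q * w q)) (dhy h (fun q => aa q * w q)) w]
    _ = 0 := by rw [Ax, Ay, Bx, By]; ring

lemma gip_corr_x (h : ℝ) (hh : h ≠ 0) (U V : GridFun M₁ M₂)
    (hUV : ∀ p, V p = dxx h U p - h ^ 2 / 12 * dxx h V p) : gip h V U ≤ 0 := by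
  have s1 : gip h V U = gip h (dxx h U) U - h ^ 2 / 12 * gip h (dxx h V) U := by
    calc gip h V U
        = gip h (fun p => dxx h U p - h ^ 2 / 12 * dxx h V p) U :=
          gip_congr fun p => by rw [hUV p]
      _ = gip h (dxx h U) U - gip h (fun p => h ^ 2 / 12 * dxx h V p) U :=
          gip_sub_left h (dxx h U) (fun p => h ^ 2 / 12 * dxx h V p) U
      _ = gip h (dxx h U) U - h ^ 2 / 12 * gip h (dxx h V) U := by
          rw [gip_smul_left h (h ^ 2 / 12) (dxx h V) U]
  have s2 : gip h (dxx h U) U = - gip h (dx h U) (dx h U) := gip_dxx h hh _ _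
  have s3 : gip h (dxx h V) U = gip h V V - h ^ 2 / 12 * gip h (dx h V) (dx h V) := by
    have a1 : gip h (dxx h V) U = gip h (dxx h U) V := by
      rw [gip_dxx h hh V U, gip_dxx h hh U V, gip_comm h (dx h V) (dx h U)]
    have a2 : gip h (dxx h U) V
        = gip h V V + h ^ 2 / 12 * gip h (dxx h V) V := by
      calc gip h (dxx h U) V
          = gip h (fun p => V p + h ^ 2 / 12 * dxx h V p) V :=
            gip_congr fun p => by
              have := hUV p
              have e : dxx h U p = V p + h ^ 2 / 12 * dxx h V p := by linarith
              rw [e]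
        _ = gip h V V + gip h (fun p => h ^ 2 / 12 * dxx h V p) V :=
            gip_add_left h V (fun p => h ^ 2 / 12 * dxx h V p) V
        _ = gip h V V + h ^ 2 / 12 * gip h (dxx h V) V := by
            rw [gip_smul_left h (h ^ 2 / 12) (dxx h V) V]
    have a3 : gip h (dxx h V) V = - gip h (dx h V) (dx h V) := gip_dxx h hh _ _
    rw [a1, a2, a3]; ring
  have inv := dx_inverse h hh V
  have n1 := gip_nonneg h (dx h U)
  have n2 := gip_nonneg h V
  have n3 := gip_nonneg h (dx h V)
  rw [s1, s2, s3]
  nlinarith [mul_le_mul_of_nonneg_left inv (show (0:ℝ) ≤ h ^ 2 by positivity),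
    mul_nonneg (sq_nonneg h) n2, sq_nonneg h]

lemma gip_corr_y (h : ℝ) (hh : h ≠ 0) (U W : GridFun M₁ M₂)
    (hUW : ∀ p, W p = dyy h U p - h ^ 2 / 12 * dyy h W p) : gip h W U ≤ 0 := by
  have s1 : gip h W U = gip h (dyy h U) U - h ^ 2 / 12 * gip h (dyy h W) U := by
    calc gip h W U
        = gip h (fun p => dyy h U p - h ^ 2 / 12 * dyy h W p) U :=
          gip_congr fun p => by rw [hUW p]
      _ = gip h (dyy h U) U - gip h (fun p => h ^ 2 / 12 * dyy h W p) U :=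
          gip_sub_left h (dyy h U) (fun p => h ^ 2 / 12 * dyy h W p) U
      _ = gip h (dyy h U) U - h ^ 2 / 12 * gip h (dyy h W) U := by
          rw [gip_smul_left h (h ^ 2 / 12) (dyy h W) U]
  have s2 : gip h (dyy h U) U = - gip h (dy h U) (dy h U) := gip_dyy h hh _ _
  have s3 : gip h (dyy h W) U = gip h W W - h ^ 2 / 12 * gip h (dy h W) (dy h W) := by
    have a1 : gip h (dyy h W) U = gip h (dyy h U) W := by
      rw [gip_dyy h hh W U, gip_dyy h hh U W, gip_comm h (dy h W) (dy h U)]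
    have a2 : gip h (dyy h U) W
        = gip h W W + h ^ 2 / 12 * gip h (dyy h W) W := by
      calc gip h (dyy h U) W
          = gip h (fun p => W p + h ^ 2 / 12 * dyy h W p) W :=
            gip_congr fun p => by
              have := hUW p
              have e : dyy h U p = W p + h ^ 2 / 12 * dyy h W p := by linarith
              rw [e]
        _ = gip h W W + gip h (fun p => h ^ 2 / 12 * dyy h W p) W :=
            gip_add_left h W (fun p => h ^ 2 / 12 * dyy h W p) W
        _ = gip h W W + h ^ 2 / 12 * gip h (dyy h W) W := by
            rw [gip_smul_left h (h ^ 2 / 12) (dyy h W) W]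
    have a3 : gip h (dyy h W) W = - gip h (dy h W) (dy h W) := gip_dyy h hh _ _
    rw [a1, a2, a3]; ring
  have inv := dy_inverse h hh W
  have n1 := gip_nonneg h (dy h U)
  have n2 := gip_nonneg h W
  have n3 := gip_nonneg h (dy h W)
  rw [s1, s2, s3]
  nlinarith [mul_le_mul_of_nonneg_left inv (show (0:ℝ) ≤ h ^ 2 by positivity),
    mul_nonneg (sq_nonneg h) n2, sq_nonneg h]

lemma gronwall_step_arith (τ A B E : ℝ) (hτ0 : 0 < τ) (hτ1 : τ ≤ 1) (hB : 0 ≤ B)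
    (hE : 0 ≤ E) (h7 : (2 - τ) * A ≤ (2 + τ) * B + 2 * τ * E) :
    A ≤ Real.exp (2 * τ) * B + 2 * τ * E := by
  have hexp : 1 + 2 * τ ≤ Real.exp (2 * τ) := by
    have := Real.add_one_le_exp (2 * τ); linarith
  nlinarith [mul_nonneg (mul_nonneg hτ0.le (sub_nonneg.2 hτ1)) hB,
    mul_nonneg (mul_nonneg hτ0.le (sub_nonneg.2 hτ1)) hE,
    mul_nonneg (sub_nonneg.2 hexp) hB]

lemma gronwall_rec_arith (τ A P E R G S : ℝ) (hτ0 : 0 < τ) (hstep : A ≤ P + 2 * τ * E)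
    (t1 : P ≤ R * (G + 2 * τ * S)) (hR : 1 ≤ R) (hE : 0 ≤ E) :
    A ≤ R * (G + 2 * τ * (S + E)) := by
  nlinarith [mul_nonneg (sub_nonneg.2 hR) (mul_nonneg (by positivity : (0:ℝ) ≤ 2 * τ) hE)]

lemma final_arith (A R G S : ℝ) (hm : A ≤ R * (G + S)) (hR : 0 ≤ R) (hG : 0 ≤ G) :
    A ≤ R * (2 * G + S) := by nlinarith [mul_nonneg hR hG]

end Aux

/-- Unconditional stability of the fine-grid correction stage. -/
theorem fine_grid_stage_stability [NeZero M₁] [NeZero M₂]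
    (h τ lam : ℝ) (hh : 0 < h) (hτ0 : 0 < τ) (hτ1 : τ ≤ 1) (hlam : 0 < lam)
    (N : ℕ) (hN : 1 ≤ N)
    (a b c ε : ℕ → GridFun M₁ M₂) (η : GridFun M₁ M₂)
    (u v w : ℕ → GridFun M₁ M₂)
    (h0 : u 0 = η)
    (heq : ∀ n, 1 ≤ n → n ≤ N → ∀ p,
      (u n p - u (n - 1) p) / τ
        + psih h (a n) (fun q => (u n q + u (n - 1) q) / 2) p
        - h ^ 2 / 2 *
            (psix h (b n) (fun q => (u n q + u (n - 1) q) / 2) p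
              + psiy h (c n) (fun q => (u n q + u (n - 1) q) / 2) p)
      = lam * ((v n p + v (n - 1) p) / 2 + (w n p + w (n - 1) p) / 2) + ε n p)
    (hv : ∀ n, n ≤ N → ∀ p, v n p = dxx h (u n) p - h ^ 2 / 12 * dxx h (v n) p)
    (hw : ∀ n, n ≤ N → ∀ p, w n p = dyy h (u n) p - h ^ 2 / 12 * dyy h (w n) p) :
    ∀ m, 1 ≤ m → m ≤ N →
      gnorm h (u m) ^ 2 ≤ Real.exp (2 * m * τ) *
        (2 * gnorm h η ^ 2 + 2 * τ * ∑ n ∈ Finset.Icc 1 m, gnorm h (ε n) ^ 2) := by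
  have hh' : h ≠ 0 := ne_of_gt hh
  have hτ' : τ ≠ 0 := ne_of_gt hτ0
  -- one-step estimate
  have step : ∀ n, 1 ≤ n → n ≤ N →
      gip h (u n) (u n) ≤ Real.exp (2 * τ) * gip h (u (n - 1)) (u (n - 1))
        + 2 * τ * gip h (ε n) (ε n) := by
    intro n hn1 hnN
    set U : GridFun M₁ M₂ := (fun q => (u n q + u (n - 1) q) / 2) with hU
    set V : GridFun M₁ M₂ := (fun q => (v n q + v (n - 1) q) / 2) with hV
    set W : GridFun M₁ M₂ := (fun q => (w n q + w (n - 1) q) / 2) with hW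
    have hVp : ∀ p : ZMod M₁ × ZMod M₂, (v n p + v (n - 1) p) / 2 = V p := fun p => by rw [hV]
    have hWp : ∀ p : ZMod M₁ × ZMod M₂, (w n p + w (n - 1) p) / 2 = W p := fun p => by rw [hW]
    have heqn := heq n hn1 hnN
    rw [← hU] at heqn
    simp only [hVp, hWp] at heqn
    -- compact relations for the averages
    have hVU : ∀ p, V p = dxx h U p - h ^ 2 / 12 * dxx h V p := by
      intro p
      have h1 := hv n hnN p
      have h2 := hv (n - 1) ((Nat.sub_le n 1).trans hnN) p
      simp only [hU, hV]
      unfold dxx at h1 h2 ⊢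
      field_simp at h1 h2 ⊢
      linarith
    have hWU : ∀ p, W p = dyy h U p - h ^ 2 / 12 * dyy h W p := by
      intro p
      have h1 := hw n hnN p
      have h2 := hw (n - 1) ((Nat.sub_le n 1).trans hnN) p
      simp only [hU, hW]
      unfold dyy at h1 h2 ⊢
      field_simp at h1 h2 ⊢
      linarith
    have cx : gip h V U ≤ 0 := gip_corr_x h hh' U V hVU
    have cy : gip h W U ≤ 0 := gip_corr_y h hh' U W hWU
    -- inner product of the scheme with U
    have key_eq : gip h (fun p => (u n p - u (n - 1) p) / τ + psih h (a n) U p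
          - h ^ 2 / 2 * (psix h (b n) U p + psiy h (c n) U p)) U
        = gip h (fun p => lam * (V p + W p) + ε n p) U :=
      gip_congr fun p => by rw [heqn p]
    have lhs_split : gip h (fun p => (u n p - u (n - 1) p) / τ + psih h (a n) U p
          - h ^ 2 / 2 * (psix h (b n) U p + psiy h (c n) U p)) U
        = gip h (fun p => (u n p - u (n - 1) p) / τ) U := by
      rw [gip_sub_left h (fun p => (u n p - u (n - 1) p) / τ + psih h (a n) U p)
            (fun p => h ^ 2 / 2 * (psix h (b n) U p + psiy h (c n) U p)) U,
          gip_add_left h (fun p => (u n p - u (n - 1) p) / τ) (psih h (a n) U) U,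
          gip_smul_left h (h ^ 2 / 2) (fun p => psix h (b n) U p + psiy h (c n) U p) U,
          gip_add_left h (psix h (b n) U) (psiy h (c n) U) U,
          gip_psih_self, gip_psix_self, gip_psiy_self]
      ring
    have rhs_split : gip h (fun p => lam * (V p + W p) + ε n p) U
        = lam * (gip h V U + gip h W U) + gip h (ε n) U := by
      rw [gip_add_left h (fun p => lam * (V p + W p)) (ε n) U,
          gip_smul_left h lam (fun p => V p + W p) U,
          gip_add_left h V W U]
    have energy : gip h (fun p => (u n p - u (n - 1) p) / τ) U
        = (gip h (u n) (u n) - gip h (u (n - 1)) (u (n - 1))) / (2 * τ) := by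
      have c1 : gip h (fun p => (u n p - u (n - 1) p) / τ) U
          = (1 / (2 * τ)) * gip h (fun p => u n p - u (n - 1) p)
              (fun p => u n p + u (n - 1) p) := by
        rw [← gip_smul_left h (1 / (2 * τ)) (fun p => u n p - u (n - 1) p)
              (fun p => u n p + u (n - 1) p)]
        refine gip_congr fun p => ?_
        simp only [hU]
        ring
      rw [c1, gip_sub_left h (u n) (u (n - 1)) (fun p => u n p + u (n - 1) p),
          gip_comm h (u n) (fun p => u n p + u (n - 1) p),
          gip_comm h (u (n - 1)) (fun p => u n p + u (n - 1) p),
          gip_add_left h (u n) (u (n - 1)) (u n),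
          gip_add_left h (u n) (u (n - 1)) (u (n - 1)),
          gip_comm h (u (n - 1)) (u n)]
      ring
    have hUU : gip h U U = (1 / 4) * (gip h (u n) (u n)
        + 2 * gip h (u n) (u (n - 1)) + gip h (u (n - 1)) (u (n - 1))) := by
      have c2 : gip h U U = (1 / 4) * gip h (fun p => u n p + u (n - 1) p)
          (fun p => u n p + u (n - 1) p) := by
        rw [← gip_smul_left h (1 / 4) (fun p => u n p + u (n - 1) p)
              (fun p => u n p + u (n - 1) p)]
        refine gip_congr fun p => ?_
        simp only [hU]
        ring
      rw [c2, gip_add_left h (u n) (u (n - 1)) (fun p => u n p + u (n - 1) p),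
          gip_comm h (u n) (fun p => u n p + u (n - 1) p),
          gip_comm h (u (n - 1)) (fun p => u n p + u (n - 1) p),
          gip_add_left h (u n) (u (n - 1)) (u n),
          gip_add_left h (u n) (u (n - 1)) (u (n - 1)),
          gip_comm h (u (n - 1)) (u n)]
      ring
    have t2 : gip h U U ≤ (gip h (u n) (u n) + gip h (u (n - 1)) (u (n - 1))) / 2 := by
      have := gip_two_mul_le h (u n) (u (n - 1))
      rw [hUU]; linarith
    have eb : gip h (ε n) U ≤ gip h (ε n) (ε n) / 2
        + (gip h (u n) (u n) + gip h (u (n - 1)) (u (n - 1))) / 4 := by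
      have t1 := gip_two_mul_le h (ε n) U
      linarith
    have hVW : lam * (gip h V U + gip h W U) ≤ 0 := by nlinarith
    have h5 : (gip h (u n) (u n) - gip h (u (n - 1)) (u (n - 1))) / (2 * τ)
        ≤ gip h (ε n) (ε n) / 2
          + (gip h (u n) (u n) + gip h (u (n - 1)) (u (n - 1))) / 4 := by
      rw [← energy, ← lhs_split, key_eq, rhs_split]
      linarith
    have h6 : gip h (u n) (u n) - gip h (u (n - 1)) (u (n - 1))
        ≤ 2 * τ * (gip h (ε n) (ε n) / 2
          + (gip h (u n) (u n) + gip h (u (n - 1)) (u (n - 1))) / 4) := by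
      calc gip h (u n) (u n) - gip h (u (n - 1)) (u (n - 1))
          = 2 * τ * ((gip h (u n) (u n) - gip h (u (n - 1)) (u (n - 1))) / (2 * τ)) := by
            field_simp
        _ ≤ _ := mul_le_mul_of_nonneg_left h5 (by positivity)
    have hB : 0 ≤ gip h (u (n - 1)) (u (n - 1)) := gip_nonneg _ _
    have hE : 0 ≤ gip h (ε n) (ε n) := gip_nonneg _ _
    have h7 : (2 - τ) * gip h (u n) (u n)
        ≤ (2 + τ) * gip h (u (n - 1)) (u (n - 1)) + 2 * τ * gip h (ε n) (ε n) := by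
      nlinarith [h6]
    exact gronwall_step_arith τ _ _ _ hτ0 hτ1 hB hE h7
  -- discrete Gronwall induction
  have main : ∀ n : ℕ, n ≤ N → gip h (u n) (u n)
      ≤ Real.exp (2 * (n : ℝ) * τ)
        * (gip h η η + 2 * τ * ∑ k ∈ Finset.Icc 1 n, gip h (ε k) (ε k)) := by
    intro n
    induction n with
    | zero =>
      intro _
      rw [Finset.Icc_eq_empty (by norm_num : ¬(1 : ℕ) ≤ 0)]
      simp [h0]
    | succ n ih =>
      intro hsn
      have hn : n ≤ N := (Nat.le_succ n).trans hsn
      have hstep := step (n + 1) (Nat.le_add_left 1 n) hsn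
      simp only [Nat.add_sub_cancel] at hstep
      have ihn := ih hn
      have hsum : ∑ k ∈ Finset.Icc 1 (n + 1), gip h (ε k) (ε k)
          = (∑ k ∈ Finset.Icc 1 n, gip h (ε k) (ε k)) + gip h (ε (n + 1)) (ε (n + 1)) :=
        Finset.sum_Icc_succ_top (Nat.le_add_left 1 n) _
      have e1 : Real.exp (2 * τ) * Real.exp (2 * (n : ℝ) * τ)
          = Real.exp (2 * ((n : ℝ) + 1) * τ) := by
        rw [← Real.exp_add]; ring_nf
      have t1 : Real.exp (2 * τ) * gip h (u n) (u n)
          ≤ Real.exp (2 * ((n : ℝ) + 1) * τ)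
            * (gip h η η + 2 * τ * ∑ k ∈ Finset.Icc 1 n, gip h (ε k) (ε k)) := by
        calc Real.exp (2 * τ) * gip h (u n) (u n)
            ≤ Real.exp (2 * τ) * (Real.exp (2 * (n : ℝ) * τ)
              * (gip h η η + 2 * τ * ∑ k ∈ Finset.Icc 1 n, gip h (ε k) (ε k))) :=
              mul_le_mul_of_nonneg_left ihn (Real.exp_nonneg _)
          _ = _ := by rw [← mul_assoc, e1]
      have hexp1 : (1 : ℝ) ≤ Real.exp (2 * ((n : ℝ) + 1) * τ) :=
        Real.one_le_exp (by positivity)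
      have hE : 0 ≤ gip h (ε (n + 1)) (ε (n + 1)) := gip_nonneg _ _
      push_cast
      rw [hsum]
      exact gronwall_rec_arith τ _ _ _ _ _ _ hτ0 hstep t1 hexp1 hE
  intro m hm1 hmN
  have hm := main m hmN
  have hsum_eq : ∑ n ∈ Finset.Icc 1 m, gnorm h (ε n) ^ 2
      = ∑ n ∈ Finset.Icc 1 m, gip h (ε n) (ε n) :=
    Finset.sum_congr rfl fun k _ => gnorm_sq h (ε k)
  rw [gnorm_sq, hsum_eq, gnorm_sq h η]
  have hη : 0 ≤ gip h η η := gip_nonneg _ _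
  have hexp : 0 ≤ Real.exp (2 * (m : ℝ) * τ) := Real.exp_nonneg _
  exact final_arith _ _ _ _ hm hexp hη
end
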